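/- Let e : [0,T] → ℝ≥0 be continuously differentiable with e(0) = 0, and suppose there are nonnegative integrable functions d, a, b on [0,T] such that for all t, e(t)² + ∫₀ᵗ d(s) ds ≤ (∫₀ᵀ a)^{1/2} (∫₀ᵀ d)^{1/2} + (∫₀ᵀ e²)^{1/2} (∫₀ᵀ b)^{1/2}. Then max_{[0,T]} e(t)² + ∫₀ᵀ d ≤ C ∫₀ᵀ (a + b) for a constant C depending only on T. -/

import Mathlib

open Set intervalIntegral

/-!
Write `M` for the right-hand side of the hypothesis, `A = ∫₀ᵀ a` and `B = ∫₀ᵀ b`. Evaluating the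
hypothesis at `t` and at `T` gives `e t ^ 2 ≤ M` and `∫₀ᵀ d ≤ M`, hence `∫₀ᵀ e ^ 2 ≤ T M`.
Substituting these back into `M` yields `M ≤ √M (√A + √(T B))`, so by Young's inequality
`M ≤ (√A + √(T B))² ≤ 2 A + 2 T B`, and the claim follows with `C = 4 (1 + T)`.
-/

theorem le_sq_of_le_sqrt_mul {M S : ℝ} (hM : 0 ≤ M) (h : M ≤ √M * S) : M ≤ S ^ 2 := by
  have hsq := Real.sq_sqrt hM
  nlinarith [sq_nonneg (√M - S)]

theorem sqrt_mul_add_sqrt_mul_le_of_absorb {A B D E T : ℝ} (hA : 0 ≤ A) (hB : 0 ≤ B)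
    (hT : 0 ≤ T) (hD : D ≤ √A * √D + √E * √B) (hE : E ≤ T * (√A * √D + √E * √B)) :
    √A * √D + √E * √B ≤ 2 * A + 2 * (T * B) := by
  set M := √A * √D + √E * √B
  have hM : 0 ≤ M := by positivity
  have hsqrtD : √D ≤ √M := Real.sqrt_le_sqrt hD
  have hsqrtE : √E ≤ √T * √M := by rw [← Real.sqrt_mul hT]; exact Real.sqrt_le_sqrt hE
  have habsorb : M ≤ √M * (√A + √T * √B) := calc
    M = √A * √D + √E * √B := rfl
    _ ≤ √A * √M + √T * √M * √B := by gcongr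
    _ = √M * (√A + √T * √B) := by ring
  have hM_le := le_sq_of_le_sqrt_mul hM habsorb
  have := Real.sq_sqrt hA
  have := Real.sq_sqrt hB
  have := Real.sq_sqrt hT
  nlinarith [sq_nonneg (√A - √T * √B)]

/-- Young-inequality absorption: if e(0)=0, e ≥ 0 and
e(t)² + ∫₀ᵗ d ≤ √(∫₀ᵀ a)·√(∫₀ᵀ d) + √(∫₀ᵀ e²)·√(∫₀ᵀ b) on [0,T],
then max_{[0,T]} e² + ∫₀ᵀ d ≤ C ∫₀ᵀ (a+b), with C depending only on T. -/
theorem stmt_16 (T : ℝ) (hT : 0 < T) :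
    ∃ C : ℝ, 0 < C ∧
      ∀ e dd a b : ℝ → ℝ,
        ContDiff ℝ 1 e → e 0 = 0 →
        (∀ t ∈ Icc (0 : ℝ) T, 0 ≤ e t) →
        (∀ t ∈ Icc (0 : ℝ) T, 0 ≤ dd t ∧ 0 ≤ a t ∧ 0 ≤ b t) →
        IntervalIntegrable dd MeasureTheory.volume 0 T →
        IntervalIntegrable a MeasureTheory.volume 0 T →
        IntervalIntegrable b MeasureTheory.volume 0 T →
        (∀ t ∈ Icc (0 : ℝ) T,
          e t ^ 2 + ∫ s in (0 : ℝ)..t, dd s ≤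
            Real.sqrt (∫ s in (0 : ℝ)..T, a s) * Real.sqrt (∫ s in (0 : ℝ)..T, dd s) +
            Real.sqrt (∫ s in (0 : ℝ)..T, e s ^ 2) * Real.sqrt (∫ s in (0 : ℝ)..T, b s)) →
        ∀ t ∈ Icc (0 : ℝ) T,
          e t ^ 2 + ∫ s in (0 : ℝ)..T, dd s ≤ C * ∫ s in (0 : ℝ)..T, (a s + b s) := by
  refine ⟨4 * (1 + T), by positivity, ?_⟩
  intro e dd a b _ _ _ hnonneg _ ha hb H t ht
  set M := √(∫ s in (0 : ℝ)..T, a s) * √(∫ s in (0 : ℝ)..T, dd s)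
    + √(∫ s in (0 : ℝ)..T, e s ^ 2) * √(∫ s in (0 : ℝ)..T, b s)
  have hA : 0 ≤ ∫ s in (0 : ℝ)..T, a s := integral_nonneg hT.le fun s hs => (hnonneg s hs).2.1
  have hB : 0 ≤ ∫ s in (0 : ℝ)..T, b s := integral_nonneg hT.le fun s hs => (hnonneg s hs).2.2
  have he_sq_le : ∀ u ∈ Icc 0 T, e u ^ 2 ≤ M := fun u hu => by
    have : 0 ≤ ∫ s in (0 : ℝ)..u, dd s :=
      integral_nonneg hu.1 fun s hs => (hnonneg s ⟨hs.1, hs.2.trans hu.2⟩).1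
    linarith [H u hu]
  have hD : ∫ s in (0 : ℝ)..T, dd s ≤ M := by nlinarith [H T ⟨hT.le, le_rfl⟩, sq_nonneg (e T)]
  have hE : ∫ s in (0 : ℝ)..T, e s ^ 2 ≤ T * M := calc
    _ ≤ ‖∫ s in (0 : ℝ)..T, e s ^ 2‖ := Real.le_norm_self _
    _ ≤ M * |T - 0| := norm_integral_le_of_norm_le_const fun u hu => by
      rw [uIoc_of_le hT.le] at hu
      rw [Real.norm_of_nonneg (sq_nonneg _)]
      exact he_sq_le u (Ioc_subset_Icc_self hu)
    _ = T * M := by rw [sub_zero, abs_of_pos hT, mul_comm]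
  have hM := sqrt_mul_add_sqrt_mul_le_of_absorb hA hB hT.le hD hE
  rw [integral_add ha hb]
  nlinarith [he_sq_le t ht, mul_nonneg hT.le hA]
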